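/- If X | R=1 ~ N(μ,σ²) and P(R=1|X=x) = logistic(ψ₀+ψ₁x), then the difference of conditional means E[X | R=1] − E[X | R=0] equals ψ₁σ². -/

import Mathlib

open MeasureTheory Real

noncomputable def normalPDF (μ σ2 x : ℝ) : ℝ :=
  (Real.sqrt (2 * Real.pi * σ2))⁻¹ * Real.exp (-(x - μ)^2 / (2 * σ2))

noncomputable def logisticSel (ψ0 ψ1 x : ℝ) : ℝ :=
  Real.exp (ψ0 + ψ1 * x) / (1 + Real.exp (ψ0 + ψ1 * x))

/-!
Under the logistic model the odds of non-selection are `(1 - p(x)) / p(x) = exp (-(ψ₀ + ψ₁ x))`,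
so the density of `X` given `R = 0` is proportional to the `N(μ, σ²)` density of `X` given
`R = 1` tilted by `exp (-ψ₁ x)`. Completing the square, an exponential tilt of a Gaussian is
again Gaussian with the same variance and mean shifted by the slope times the variance, here
`μ - ψ₁ σ²`. The two conditional means are therefore `μ` and `μ - ψ₁ σ²`.
-/

open ProbabilityTheory

section normalPDF

variable {σ2 : ℝ} (μ : ℝ)

lemma normalPDF_eq_gaussianPDFReal (hσ2 : 0 ≤ σ2) :
    normalPDF μ σ2 = gaussianPDFReal μ σ2.toNNReal := by
  rw [gaussianPDFReal_def, Real.coe_toNNReal _ hσ2]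
  rfl

lemma integral_normalPDF (hσ2 : 0 < σ2) : ∫ x, normalPDF μ σ2 x = 1 := by
  rw [normalPDF_eq_gaussianPDFReal μ hσ2.le]
  exact integral_gaussianPDFReal_eq_one μ (Real.toNNReal_pos.mpr hσ2).ne'

lemma integral_mul_normalPDF (hσ2 : 0 < σ2) : ∫ x, x * normalPDF μ σ2 x = μ := by
  have hv := (Real.toNNReal_pos.mpr hσ2).ne'
  simpa [normalPDF_eq_gaussianPDFReal μ hσ2.le, integral_gaussianReal_eq_integral_smul hv, mul_comm]
    using integral_id_gaussianReal (μ := μ) (v := σ2.toNNReal)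

lemma normalPDF_mul_exp_affine (hσ2 : σ2 ≠ 0) (a b x : ℝ) :
    normalPDF μ σ2 x * exp (a + b * x) =
      exp (a + b * μ + b ^ 2 * σ2 / 2) * normalPDF (μ + b * σ2) σ2 x := by
  rw [normalPDF, normalPDF, mul_assoc, ← exp_add, mul_left_comm, ← exp_add]
  congr 2
  field_simp
  ring

end normalPDF

lemma one_sub_logisticSel (ψ0 ψ1 x : ℝ) :
    1 - logisticSel ψ0 ψ1 x = logisticSel ψ0 ψ1 x * exp (-(ψ0 + ψ1 * x)) := by
  have hpos : 0 < 1 + exp (ψ0 + ψ1 * x) := by positivity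
  rw [logisticSel, exp_neg]
  field_simp
  ring

theorem conditional_mean_difference_general
    (f : ℝ → ℝ) (μ σ2 ψ0 ψ1 : ℝ) (hσ2 : 0 < σ2)
    (P1 P0 : ℝ)
    (hP0 : P0 = ∫ x, (1 - logisticSel ψ0 ψ1 x) * f x)
    (hP1pos : 0 < P1)
    (hcond1 : ∀ x, logisticSel ψ0 ψ1 x * f x / P1 = normalPDF μ σ2 x) :
    (∫ x, x * (logisticSel ψ0 ψ1 x * f x / P1)) -
      (∫ x, x * ((1 - logisticSel ψ0 ψ1 x) * f x / P0)) = ψ1 * σ2 := by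
  set c := exp (-ψ0 + -ψ1 * μ + (-ψ1) ^ 2 * σ2 / 2)
  set μ0 := μ + -ψ1 * σ2
  have hcond0 : ∀ x, (1 - logisticSel ψ0 ψ1 x) * f x = P1 * c * normalPDF μ0 σ2 x := by
    intro x
    have hsel : logisticSel ψ0 ψ1 x * f x = normalPDF μ σ2 x * P1 :=
      (div_eq_iff hP1pos.ne').1 (hcond1 x)
    calc (1 - logisticSel ψ0 ψ1 x) * f x
        = normalPDF μ σ2 x * exp (-ψ0 + -ψ1 * x) * P1 := by
          rw [one_sub_logisticSel, mul_right_comm, hsel, neg_add, neg_mul]; ring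
      _ = P1 * c * normalPDF μ0 σ2 x := by
          rw [normalPDF_mul_exp_affine μ hσ2.ne']; ring
  have hP0_eq : P0 = P1 * c := by
    simp only [hP0, hcond0, integral_const_mul, integral_normalPDF μ0 hσ2, mul_one]
  have hP0_ne : P1 * c ≠ 0 := by positivity
  simp only [hcond1, hcond0, hP0_eq, mul_div_cancel_left₀ _ hP0_ne, integral_mul_normalPDF _ hσ2, μ0]
  ring

/-- `E[X|R=1] − E[X|R=0] = ψ₁σ²` under the logistic selection model. -/
theorem conditional_mean_difference
    (f : ℝ → ℝ) (μ σ2 ψ0 ψ1 : ℝ) (hσ2 : 0 < σ2)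
    (hf_nonneg : ∀ x, 0 ≤ f x) (hf_meas : Measurable f) (hInt : Integrable f)
    (P1 P0 : ℝ)
    (hP1 : P1 = ∫ x, logisticSel ψ0 ψ1 x * f x)
    (hP0 : P0 = ∫ x, (1 - logisticSel ψ0 ψ1 x) * f x)
    (hP1pos : 0 < P1) (hP0pos : 0 < P0)
    (hcond1 : ∀ x, logisticSel ψ0 ψ1 x * f x / P1 = normalPDF μ σ2 x) :
    (∫ x, x * (logisticSel ψ0 ψ1 x * f x / P1)) -
      (∫ x, x * ((1 - logisticSel ψ0 ψ1 x) * f x / P0)) = ψ1 * σ2 :=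
  conditional_mean_difference_general f μ σ2 ψ0 ψ1 hσ2 P1 P0 hP0 hP1pos hcond1
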